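/- arXiv:1412.7478 — 14 statements merged into one kernel-verified Lean document; each statement's English description precedes it below -/
import Mathlib

section
/- Let A be a ring, ι a type, and x : ι → A a family of elements such that x i * x j = - (x j * x i) whenever i ≠ j. Then for any pairwise distinct indices i, j, k one has x i * x j * x k = - (x k * x j * x i), and whenever i, j, k are not pairwise distinct one has x i * x j * x k = x k * x j * x i. -/
/-- Pairwise anticommutation relations `x i * x j = -(x j * x i)` (for distinct indices)
imply the half-anticommutation relations: `x i * x j * x k = -(x k * x j * x i)` for
pairwise distinct indices, and `x i * x j * x k = x k * x j * x i` otherwise. -/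
theorem twisted_sphere_half_anticommutation {A : Type*} [Ring A] {ι : Type*} (x : ι → A)
    (h : ∀ i j : ι, i ≠ j → x i * x j = -(x j * x i)) :
    (∀ i j k : ι, i ≠ j → j ≠ k → i ≠ k →
      x i * x j * x k = -(x k * x j * x i)) ∧
    (∀ i j k : ι, ¬(i ≠ j ∧ j ≠ k ∧ i ≠ k) →
      x i * x j * x k = x k * x j * x i) := by
  constructor
  · intro i j k hij hjk hik
    calc x i * x j * x k = -(x j * x i) * x k := by rw [h i j hij]
      _ = -(x j * (x i * x k)) := by noncomm_ring
      _ = -(x j * -(x k * x i)) := by rw [h i k hik]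
      _ = x j * x k * x i := by noncomm_ring
      _ = -(x k * x j) * x i := by rw [h j k hjk]
      _ = -(x k * x j * x i) := by noncomm_ring
  · intro i j k hn
    by_cases hij : i = j
    · subst hij
      by_cases hik : i = k
      · subst hik; noncomm_ring
      · calc x i * x i * x k = x i * (x i * x k) := by noncomm_ring
          _ = x i * -(x k * x i) := by rw [h i k hik]
          _ = -(x i * x k) * x i := by noncomm_ring
          _ = x k * x i * x i := by rw [h i k hik]; noncomm_ring
    · by_cases hjk : j = k
      · subst hjk
        by_cases hik : i = j
        · subst hik; noncomm_ring
        · calc x i * x j * x j = (x i * x j) * x j := by noncomm_ring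
            _ = -(x j * x i) * x j := by rw [h i j hik]
            _ = -(x j * (x i * x j)) := by noncomm_ring
            _ = -(x j * -(x j * x i)) := by rw [h i j hik]
            _ = x j * x j * x i := by noncomm_ring
      · by_cases hik : i = k
        · subst hik; noncomm_ring
        · exact absurd ⟨hij, hjk, hik⟩ hn
end

section
/- Let N ≥ 1 and let z : Fin N → ℂ satisfy ∑ i, ‖z i‖^2 = 1 and z i * z j = 0 for all i ≠ j. Then there exists an index i with ‖z i‖ = 1 and z j = 0 for all j ≠ i. -/
open scoped BigOperators

/-- A point of the complex unit sphere whose coordinates satisfy `z i * z j = 0` for all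
distinct `i, j` has all but one coordinate vanishing, the remaining one of modulus `1`. -/
theorem classical_version_twisted_complex_sphere {N : ℕ} (hN : 1 ≤ N) (z : Fin N → ℂ)
    (hsum : ∑ i, ‖z i‖ ^ 2 = 1)
    (hz : ∀ i j : Fin N, i ≠ j → z i * z j = 0) :
    ∃ i : Fin N, ‖z i‖ = 1 ∧ ∀ j : Fin N, j ≠ i → z j = 0 := by
  have hex : ∃ i : Fin N, z i ≠ 0 := by
    by_contra h
    push_neg at h
    simp [h] at hsum
  obtain ⟨i, hi⟩ := hex
  have hzero : ∀ j : Fin N, j ≠ i → z j = 0 := by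
    intro j hj
    have := hz i j (Ne.symm hj)
    rcases mul_eq_zero.mp this with h | h
    · exact absurd h hi
    · exact h
  refine ⟨i, ?_, hzero⟩
  have : ∑ j, ‖z j‖ ^ 2 = ‖z i‖ ^ 2 := by
    rw [Fintype.sum_eq_single i]
    intro j hj
    simp [hzero j hj]
  rw [this] at hsum
  nlinarith [norm_nonneg (z i)]
end

section
/- Let A be a commutative ring equipped with a star ring structure, ι a type, and z : ι → A. For each i define the 2×2 matrix X i = !![0, z i; star (z i), 0] over A. Then: (a) each X i is self-adjoint, i.e. (X i)ᴴ = X i (conjugate transpose); (b) X i * X j * X k = X k * X j * X i for all i, j, k; (c) if ι = Fin N and ∑ i, z i * star (z i) = 1, then ∑ i, (X i)^2 = 1. -/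
open Matrix

/-- The `2 × 2` matrix `[[0, a], [star a, 0]]` associated to an element `a`. -/
def Xmat {A : Type*} [Ring A] [StarRing A] (a : A) : Matrix (Fin 2) (Fin 2) A :=
  !![0, a; star a, 0]

lemma Xmat_sq {A : Type*} [CommRing A] [StarRing A] (a : A) :
    Xmat a ^ 2 = !![a * star a, 0; 0, star a * a] := by
  rw [pow_two, Xmat]
  ext i j
  fin_cases i <;> fin_cases j <;> simp [Matrix.mul_apply, Fin.sum_univ_two]

set_option maxHeartbeats 1000000 in
/-- The 2×2 matrix trick: over a commutative star ring, the matrices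
`X i = [[0, z i], [star (z i), 0]]` are self-adjoint, half-commute (`abc = cba`), and,
when `∑ i, z i * star (z i) = 1`, their squares sum up to `1`. -/
theorem matrix_trick_half_liberation {A : Type*} [CommRing A] [StarRing A] {ι : Type*}
    (z : ι → A) :
    (∀ i : ι, (Xmat (z i))ᴴ = Xmat (z i)) ∧
    (∀ i j k : ι, Xmat (z i) * Xmat (z j) * Xmat (z k) =
      Xmat (z k) * Xmat (z j) * Xmat (z i)) ∧
    (∀ (N : ℕ) (w : Fin N → A), (∑ i, w i * star (w i)) = 1 →
      ∑ i, (Xmat (w i)) ^ 2 = 1) := by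
  refine ⟨?_, ?_, ?_⟩
  · intro i
    ext a b
    fin_cases a <;> fin_cases b <;> simp [Xmat]
  · intro i j k
    ext a b
    fin_cases a <;> fin_cases b <;>
      simp [Xmat, Matrix.mul_apply, Fin.sum_univ_two] <;> ring
  · intro N w h
    have h2 : (∑ i, star (w i) * w i) = 1 := by
      rw [← h]; exact Finset.sum_congr rfl fun i _ => mul_comm _ _
    have key : ∑ i, Xmat (w i) ^ 2 =
        !![∑ i, w i * star (w i), 0; 0, ∑ i, star (w i) * w i] := by
      simp only [Xmat_sq]
      ext p q
      rw [Matrix.sum_apply]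
      fin_cases p <;> fin_cases q <;> simp [Fin.mk_zero, Fin.mk_one]
    rw [key, h, h2]
    ext p q
    fin_cases p <;> fin_cases q <;> simp [Matrix.one_apply, Fin.mk_zero, Fin.mk_one]
end

section
/- Let A be a star ring, ι a type, and z : ι → A such that: z i * star (z i) = star (z i) * z i for all i; and for i ≠ j, z i * z j = - (z j * z i) and z i * star (z j) = - (star (z j) * z i). For each i define the 2×2 matrix X i = !![0, z i; star (z i), 0] over A. Then X i * X j * X k = - (X k * X j * X i) for pairwise distinct i, j, k, and X i * X j * X k = X k * X j * X i whenever i, j, k are not pairwise distinct. -/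
open Matrix

section Aux

variable {A : Type*} [Ring A]

lemma anti3 {a b c : A} (hab : a * b = -(b * a)) (hac : a * c = -(c * a))
    (hbc : b * c = -(c * b)) : a * b * c = -(c * b * a) := by
  calc a * b * c = -(b * a) * c := by rw [hab]
    _ = -(b * (a * c)) := by rw [neg_mul, mul_assoc]
    _ = b * (c * a) := by rw [hac, mul_neg, neg_neg]
    _ = (b * c) * a := by rw [mul_assoc]
    _ = -(c * b * a) := by rw [hbc, neg_mul]

lemma mid3 {m n c : A} (hn : m * n = n * m) (h1 : c * m = -(m * c))
    (h2 : c * n = -(n * c)) : m * n * c = c * n * m := by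
  have h2' : n * c = -(c * n) := by rw [h2, neg_neg]
  calc m * n * c = m * (n * c) := by rw [mul_assoc]
    _ = m * (-(c * n)) := by rw [h2']
    _ = -(m * c) * n := by rw [mul_neg, neg_mul, mul_assoc]
    _ = (c * m) * n := by rw [← h1]
    _ = c * (m * n) := by rw [mul_assoc]
    _ = c * n * m := by rw [hn, mul_assoc]

lemma mid3' {m n c : A} (hn : m * n = n * m) (h1 : c * m = -(m * c))
    (h2 : c * n = -(n * c)) : c * m * n = n * m * c := by
  calc c * m * n = -(m * c) * n := by rw [h1]
    _ = -(m * (c * n)) := by rw [neg_mul, mul_assoc]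
    _ = m * (n * c) := by rw [h2, mul_neg, neg_neg]
    _ = (m * n) * c := by rw [mul_assoc]
    _ = n * m * c := by rw [hn]

lemma Xtriple [StarRing A] (a b c : A) :
    Xmat a * Xmat b * Xmat c = !![0, a * star b * c; star a * b * star c, 0] := by
  simp [Xmat, Matrix.mul_fin_two]

lemma Xeq [StarRing A] {x y x' y' : A} (hx : x = x') (hy : y = y') :
    (!![0, x; y, 0] : Matrix (Fin 2) (Fin 2) A) = !![0, x'; y', 0] := by
  rw [hx, hy]

lemma Xneg [StarRing A] {x y x' y' : A} (hx : x = -x') (hy : y = -y') :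
    (!![0, x; y, 0] : Matrix (Fin 2) (Fin 2) A) = -!![0, x'; y', 0] := by
  subst hx hy
  ext i j
  fin_cases i <;> fin_cases j <;> simp

end Aux

/-- The twisted 2×2 matrix trick: if the `z i` are normal, anticommute with each other and
with each other's adjoints (for distinct indices), then the matrices
`X i = [[0, z i], [star (z i), 0]]` half-anticommute: `X i * X j * X k = -(X k * X j * X i)`
for pairwise distinct indices, and `X i * X j * X k = X k * X j * X i` otherwise. -/
theorem matrix_trick_twisted_half_liberation {A : Type*} [Ring A] [StarRing A] {ι : Type*}
    (z : ι → A)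
    (hnormal : ∀ i : ι, z i * star (z i) = star (z i) * z i)
    (hanti : ∀ i j : ι, i ≠ j → z i * z j = -(z j * z i))
    (hanti' : ∀ i j : ι, i ≠ j → z i * star (z j) = -(star (z j) * z i)) :
    (∀ i j k : ι, i ≠ j → j ≠ k → i ≠ k →
      Xmat (z i) * Xmat (z j) * Xmat (z k) = -(Xmat (z k) * Xmat (z j) * Xmat (z i))) ∧
    (∀ i j k : ι, ¬(i ≠ j ∧ j ≠ k ∧ i ≠ k) →
      Xmat (z i) * Xmat (z j) * Xmat (z k) = Xmat (z k) * Xmat (z j) * Xmat (z i)) := by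
  -- star versions of the anticommutation relations
  have hstar : ∀ i j : ι, i ≠ j → star (z i) * star (z j) = -(star (z j) * star (z i)) := by
    intro i j hij
    have := congrArg star (hanti j i hij.symm)
    simpa [StarMul.star_mul] using this
  have hanti'' : ∀ i j : ι, i ≠ j → star (z i) * z j = -(z j * star (z i)) := by
    intro i j hij
    have := hanti' j i hij.symm
    rw [this, neg_neg]
  constructor
  · intro i j k hij hjk hik
    rw [Xtriple, Xtriple]
    refine Xneg ?_ ?_
    · exact anti3 (hanti' i j hij) (hanti i k hik) (hanti'' j k hjk)
    · exact anti3 (hanti'' i j hij) (hstar i k hik) (hanti' j k hjk)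
  · intro i j k h
    push_neg at h
    rw [Xtriple, Xtriple]
    by_cases hik : i = k
    · subst hik; rfl
    · by_cases hij : i = j
      · subst hij
        refine Xeq ?_ ?_
        · exact mid3 (hnormal i) (hanti k i (Ne.symm hik)) (hanti' k i (Ne.symm hik))
        · exact mid3 (hnormal i).symm (hstar k i (Ne.symm hik)) (hanti'' k i (Ne.symm hik))
      · have hjk : j = k := by by_contra hc; exact hik (h hij hc)
        subst hjk
        refine Xeq ?_ ?_
        · exact mid3' ((hnormal j).symm) (hanti' i j hij) (hanti i j hij)
        · exact mid3' (hnormal j) (hanti'' i j hij) (hstar i j hij)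
end

section
/- Let A be a ring, ι a type, and x : ι → A a family of elements satisfying the 3-cycle relations x i * x j * x k = x k * x i * x j for all i, j, k. Then (x i * x j - x j * x i)^2 = 0 for all i, j. -/
/-- The 3-cycle relations `x i * x j * x k = x k * x i * x j` force the squared
commutators `(x i * x j - x j * x i) ^ 2` to vanish. -/
theorem three_cycle_squared_commutator {A : Type*} [Ring A] {ι : Type*} (x : ι → A)
    (h : ∀ i j k : ι, x i * x j * x k = x k * x i * x j) :
    ∀ i j : ι, (x i * x j - x j * x i) ^ 2 = 0 := by
  intro i j
  have e1 := h i j i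
  have e2 := h j i j
  have expand : (x i * x j - x j * x i) ^ 2 =
      x i * x j * (x i * x j) - x i * x j * (x j * x i)
        - x j * x i * (x i * x j) + x j * x i * (x j * x i) := by
    noncomm_ring
  rw [expand]
  simp only [mul_assoc] at e1 e2 ⊢
  rw [e2, ← e1]
  abel
end

section
/- Let A be a C*-algebra, ι a type, and x : ι → A a family of self-adjoint elements (star (x i) = x i) satisfying the 3-cycle relations x i * x j * x k = x k * x i * x j for all i, j, k. Then the elements pairwise commute: x i * x j = x j * x i for all i, j. -/
/-- In a C*-algebra, self-adjoint elements satisfying the 3-cycle relations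
`x i * x j * x k = x k * x i * x j` pairwise commute. -/
theorem three_cycle_collapses_to_classical {A : Type*} [NormedRing A] [StarRing A]
    [CStarRing A] {ι : Type*} (x : ι → A)
    (hsa : ∀ i : ι, star (x i) = x i)
    (h : ∀ i j k : ι, x i * x j * x k = x k * x i * x j) :
    ∀ i j : ι, x i * x j = x j * x i := by
  intro i j
  set a := x i with ha
  set b := x j with hb
  set c : A := a * b - b * a with hc
  have h1 : a * b * a = a * a * b := h i j i
  have h2 : a * b * b = b * a * b := h i j j
  have h3 : b * a * a = a * b * a := h j i i
  have h4 : b * a * b = b * b * a := h j i j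
  have h5 : a * a * b = b * a * a := h i i j
  -- all degree-4 monomials equal a*a*b*b
  have t1 : a * b * (a * b) = a * a * b * b := by
    rw [← mul_assoc, h1]
  have t3 : b * a * (a * b) = a * a * b * b := by
    rw [← mul_assoc, h3, h1]
  have t24 : a * b * (b * a) = b * a * (b * a) := by
    rw [← mul_assoc, h2, mul_assoc]
  have hcc : c * c = 0 := by
    have expand : c * c = a * b * (a * b) - a * b * (b * a) - b * a * (a * b) + b * a * (b * a) := by
      rw [hc]; noncomm_ring
    rw [expand, t1, t24, t3]; abel
  have hstar : star c = -c := by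
    rw [hc, star_sub, star_mul, star_mul, hsa i, hsa j, neg_sub]
  have hnorm : ‖c‖ * ‖c‖ = 0 := by
    rw [← CStarRing.norm_star_mul_self, hstar, neg_mul, hcc, neg_zero, norm_zero]
  have hczero : c = 0 := by
    have : ‖c‖ = 0 := by nlinarith [norm_nonneg c]
    exact norm_eq_zero.mp this
  have := sub_eq_zero.mp hczero
  exact this
end

section
/- Let A be a ring, ι a type, and x : ι → A a family of elements satisfying: (1) x i * x j * x k = x k * x i * x j for pairwise distinct i, j, k; (2) x i * x i * x k = x k * x i * x i for i ≠ k; (3) x i * x j * x i = - (x i * x i * x j) for i ≠ j; (4) x i * x j * x j = - (x j * x i * x j) for i ≠ j. Then (x i * x j + x j * x i)^2 = 0 for all i ≠ j. -/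
/-- The twisted 3-cycle relations force the squared anticommutators
`(x i * x j + x j * x i) ^ 2` to vanish, for distinct indices. -/
theorem twisted_three_cycle_squared_anticommutator {A : Type*} [Ring A] {ι : Type*}
    (x : ι → A)
    (h1 : ∀ i j k : ι, i ≠ j → j ≠ k → i ≠ k → x i * x j * x k = x k * x i * x j)
    (h2 : ∀ i k : ι, i ≠ k → x i * x i * x k = x k * x i * x i)
    (h3 : ∀ i j : ι, i ≠ j → x i * x j * x i = -(x i * x i * x j))
    (h4 : ∀ i j : ι, i ≠ j → x i * x j * x j = -(x j * x i * x j)) :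
    ∀ i j : ι, i ≠ j → (x i * x j + x j * x i) ^ 2 = 0 := by
  intro i j hij
  have key : (x i * x j + x j * x i) ^ 2 =
      (x i * x j * x i) * x j + (x i * x j * x j) * x i +
      (x j * x i * x i) * x j + (x j * x i * x j) * x i := by
    noncomm_ring
  rw [key, h4 i j hij, h4 j i hij.symm, h3 i j hij, h3 j i hij.symm]
  noncomm_ring
end

section
/- Let A be a C*-algebra, ι a type, and x : ι → A a family of self-adjoint elements (star (x i) = x i) satisfying: (1) x i * x j * x k = x k * x i * x j for pairwise distinct i, j, k; (2) x i * x i * x k = x k * x i * x i for i ≠ k; (3) x i * x j * x i = - (x i * x i * x j) for i ≠ j; (4) x i * x j * x j = - (x j * x i * x j) for i ≠ j. Then x i * x j = - (x j * x i) for all i ≠ j. -/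
/-! In a C*-algebra a self-adjoint element `c` with `c * c = 0` vanishes, since
`‖c‖ ^ 2 = ‖c * c‖`. For self-adjoint `a, b` the anticommutator `a * b + b * a` is self-adjoint,
and the relations (2) and (3) for the pairs `(i, j)` and `(j, i)` already force its square to
vanish. -/

theorem mul_add_mul_mul_self_eq_zero {R : Type*} [Ring R] {a b : R}
    (haab : a * a * b = b * a * a) (hbba : b * b * a = a * b * b)
    (haba : a * b * a = -(a * a * b)) (hbab : b * a * b = -(b * b * a)) :
    (a * b + b * a) * (a * b + b * a) = 0 := by
  calc (a * b + b * a) * (a * b + b * a)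
      = a * b * a * b + a * (b * b * a) + b * (a * a * b) + b * a * b * a := by noncomm_ring
    _ = -(a * a * b * b) + a * (a * b * b) + b * (b * a * a) - b * b * a * a := by
      rw [haba, hbab, hbba, haab]; noncomm_ring
    _ = 0 := by noncomm_ring

theorem IsSelfAdjoint.mul_add_mul_swap {R : Type*} [NonUnitalNonAssocSemiring R] [StarRing R]
    {a b : R} (ha : IsSelfAdjoint a) (hb : IsSelfAdjoint b) : IsSelfAdjoint (a * b + b * a) := by
  simp only [isSelfAdjoint_iff, star_add, star_mul, ha.star_eq, hb.star_eq, add_comm]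

theorem IsSelfAdjoint.eq_zero_of_mul_self_eq_zero {E : Type*} [NonUnitalNormedRing E]
    [StarRing E] [CStarRing E] {c : E} (hc : IsSelfAdjoint c) (hcc : c * c = 0) : c = 0 :=
  (CStarRing.star_mul_self_eq_zero_iff c).mp (by rwa [hc.star_eq])

theorem twisted_three_cycle_collapses_to_twisted_sphere_general {A : Type*} [NormedRing A]
    [StarRing A] [CStarRing A] {ι : Type*} (x : ι → A)
    (hsa : ∀ i : ι, star (x i) = x i)
    (h2 : ∀ i k : ι, i ≠ k → x i * x i * x k = x k * x i * x i)
    (h3 : ∀ i j : ι, i ≠ j → x i * x j * x i = -(x i * x i * x j)) :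
    ∀ i j : ι, i ≠ j → x i * x j = -(x j * x i) := by
  intro i j hij
  have hsq : (x i * x j + x j * x i) * (x i * x j + x j * x i) = 0 :=
    mul_add_mul_mul_self_eq_zero (by rw [h2 i j hij, mul_assoc])
      (by rw [h2 j i hij.symm, mul_assoc]) (h3 i j hij) (h3 j i hij.symm)
  have hzero : x i * x j + x j * x i = 0 :=
    (IsSelfAdjoint.mul_add_mul_swap (hsa i) (hsa j)).eq_zero_of_mul_self_eq_zero hsq
  exact eq_neg_of_add_eq_zero_left hzero

/-- In a C*-algebra, self-adjoint elements satisfying the twisted 3-cycle relations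
pairwise anticommute. -/
theorem twisted_three_cycle_collapses_to_twisted_sphere {A : Type*} [NormedRing A]
    [StarRing A] [CStarRing A] {ι : Type*} (x : ι → A)
    (hsa : ∀ i : ι, star (x i) = x i)
    (h1 : ∀ i j k : ι, i ≠ j → j ≠ k → i ≠ k → x i * x j * x k = x k * x i * x j)
    (h2 : ∀ i k : ι, i ≠ k → x i * x i * x k = x k * x i * x i)
    (h3 : ∀ i j : ι, i ≠ j → x i * x j * x i = -(x i * x i * x j))
    (h4 : ∀ i j : ι, i ≠ j → x i * x j * x j = -(x j * x i * x j)) :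
    ∀ i j : ι, i ≠ j → x i * x j = -(x j * x i) :=
  twisted_three_cycle_collapses_to_twisted_sphere_general x hsa h2 h3
end

section
/- Let A be a star ring and z : Fin N → A with ∑ i, z i * star (z i) = 1 and ∑ i, star (z i) * z i = 1. Let W ⊆ A be the set of all elements of the form z i or star (z i). Suppose a * b * c * d = c * a * d * b for all a, b, c, d ∈ W. Then a * b = b * a for all a, b ∈ W. -/
/-- The set of coordinates of a noncommutative sphere together with their adjoints. -/
def coordSet {A : Type*} [Star A] {N : ℕ} (z : Fin N → A) : Set A :=
  {a | ∃ i, a = z i ∨ a = star (z i)}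

/-- Depth 4 analysis: over a noncommutative sphere, the relations `abcd = cadb` among all
coordinates and their adjoints imply full commutation `ab = ba`. -/
theorem depth_four_relation_cadb {A : Type*} [Ring A] [StarRing A] {N : ℕ}
    (z : Fin N → A)
    (h1 : ∑ i, z i * star (z i) = 1)
    (h2 : ∑ i, star (z i) * z i = 1)
    (h : ∀ a b c d : A, a ∈ coordSet z → b ∈ coordSet z → c ∈ coordSet z →
      d ∈ coordSet z → a * b * c * d = c * a * d * b) :
    ∀ a b : A, a ∈ coordSet z → b ∈ coordSet z → a * b = b * a := by
  intro a b ha hb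
  have key : ∀ p q c d : A, p ∈ coordSet z → q ∈ coordSet z → c ∈ coordSet z →
      d ∈ coordSet z → p * q * c * d = d * c * q * p := by
    intro p q c d hp hq hc hd
    rw [h p q c d hp hq hc hd, h c p d q hc hp hd hq]
  have hz : ∀ i, z i ∈ coordSet z := fun i => ⟨i, Or.inl rfl⟩
  have hsz : ∀ i, star (z i) ∈ coordSet z := fun i => ⟨i, Or.inr rfl⟩
  have term : ∀ i, a * (z i * star (z i)) * b = b * (star (z i) * z i) * a := by
    intro i
    have := key a (z i) (star (z i)) b ha (hz i) (hsz i) hb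
    simp only [mul_assoc] at this ⊢
    exact this
  calc a * b = a * (∑ i, z i * star (z i)) * b := by rw [h1, mul_one]
    _ = ∑ i, a * (z i * star (z i)) * b := by rw [Finset.mul_sum, Finset.sum_mul]
    _ = ∑ i, b * (star (z i) * z i) * a := Finset.sum_congr rfl fun i _ => term i
    _ = b * (∑ i, star (z i) * z i) * a := by rw [Finset.mul_sum, Finset.sum_mul]
    _ = b * a := by rw [h2, mul_one]
end

section
/- Let A be a star ring and z : Fin N → A with ∑ i, z i * star (z i) = 1 and ∑ i, star (z i) * z i = 1. Let W ⊆ A be the set of all elements of the form z i or star (z i). Suppose a * b * c * d = c * d * a * b for all a, b, c, d ∈ W. Then a * b * c = c * b * a for all a, b, c ∈ W. -/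
/-- Depth 4 analysis: over a noncommutative sphere, the relations `abcd = cdab` among all
coordinates and their adjoints imply the half-commutation relations `abc = cba`. -/
theorem depth_four_relation_cdab {A : Type*} [Ring A] [StarRing A] {N : ℕ}
    (z : Fin N → A)
    (h1 : ∑ i, z i * star (z i) = 1)
    (h2 : ∑ i, star (z i) * z i = 1)
    (h : ∀ a b c d : A, a ∈ coordSet z → b ∈ coordSet z → c ∈ coordSet z →
      d ∈ coordSet z → a * b * c * d = c * d * a * b) :
    ∀ a b c : A, a ∈ coordSet z → b ∈ coordSet z → c ∈ coordSet z →
      a * b * c = c * b * a := by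
  have h5 : ∀ a b c d e : A, a ∈ coordSet z → b ∈ coordSet z → c ∈ coordSet z →
      d ∈ coordSet z → e ∈ coordSet z → a * b * c * d * e = c * b * e * d * a := by
    intro a b c d e ha hb hc hd he
    have k1 := h a b c d ha hb hc hd
    have k2 := h d a b e hd ha hb he
    calc a * b * c * d * e = (a * b * c * d) * e := by ring_nf
      _ = (c * d * a * b) * e := by rw [k1]
      _ = c * (d * a * b * e) := by noncomm_ring
      _ = c * (b * e * d * a) := by rw [k2]
      _ = c * b * e * d * a := by noncomm_ring
  intro a b c ha hb hc
  have key : ∀ i : Fin N,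
      a * (z i * star (z i)) * (b * c) = (star (z i) * z i) * (c * b * a) := by
    intro i
    have := h5 a (z i) (star (z i)) b c ha ⟨i, Or.inl rfl⟩ ⟨i, Or.inr rfl⟩ hb hc
    calc a * (z i * star (z i)) * (b * c)
        = a * z i * star (z i) * b * c := by noncomm_ring
      _ = star (z i) * z i * c * b * a := this
      _ = (star (z i) * z i) * (c * b * a) := by noncomm_ring
  have sums : ∑ i, a * (z i * star (z i)) * (b * c)
      = ∑ i, (star (z i) * z i) * (c * b * a) := Finset.sum_congr rfl fun i _ => key i
  rw [← Finset.sum_mul, ← Finset.mul_sum, h1, ← Finset.sum_mul, h2] at sums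
  simpa [mul_assoc] using sums
end

section
/- Let R be a commutative ring, A an R-algebra, and u : Fin N → Fin N → A a matrix of elements satisfying: u i j * u i k = - (u i k * u i j) for all i and all j ≠ k; u i j * u k j = - (u k j * u i j) for all j and all i ≠ k; and u i j * u k l = u k l * u i j whenever i ≠ k and j ≠ l. Then the elements U i j := ∑ k, (u i k) ⊗ₜ (u k j) of the tensor product algebra A ⊗[R] A satisfy the same three families of relations: U i j * U i k = - (U i k * U i j) for j ≠ k, U i j * U k j = - (U k j * U i j) for i ≠ k, and U i j * U k l = U k l * U i j for i ≠ k, j ≠ l. -/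
open scoped TensorProduct

private lemma sum_pair_cancel {ι M : Type*} [AddCommGroup M] (s : Finset ι)
    (f g : ι → ι → M) (h : ∀ a ∈ s, ∀ b ∈ s, f a b + g b a = 0) :
    (∑ a ∈ s, ∑ b ∈ s, f a b) + (∑ a ∈ s, ∑ b ∈ s, g a b) = 0 := by
  rw [Finset.sum_comm (f := g), ← Finset.sum_add_distrib]
  refine Finset.sum_eq_zero fun a ha => ?_
  rw [← Finset.sum_add_distrib]
  exact Finset.sum_eq_zero fun b hb => h a ha b hb

private lemma sum_pair_eq {ι M : Type*} [AddCommMonoid M] (s : Finset ι)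
    (f g : ι → ι → M) (h : ∀ a ∈ s, ∀ b ∈ s, f a b = g b a) :
    (∑ a ∈ s, ∑ b ∈ s, f a b) = ∑ a ∈ s, ∑ b ∈ s, g a b := by
  rw [Finset.sum_comm (f := g)]
  exact Finset.sum_congr rfl fun a ha => Finset.sum_congr rfl fun b hb => h a ha b hb

/-- The comultiplication formula `U i j = ∑ k, u i k ⊗ u k j` preserves the twisted
orthogonal relations: anticommutation on rows and columns, commutation elsewhere. -/
theorem twisted_orthogonal_comultiplication {R : Type*} [CommRing R] {A : Type*} [Ring A]
    [Algebra R A] {N : ℕ} (u : Fin N → Fin N → A)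
    (hrow : ∀ i j k : Fin N, j ≠ k → u i j * u i k = -(u i k * u i j))
    (hcol : ∀ j i k : Fin N, i ≠ k → u i j * u k j = -(u k j * u i j))
    (hcomm : ∀ i j k l : Fin N, i ≠ k → j ≠ l → u i j * u k l = u k l * u i j)
    (U : Fin N → Fin N → A ⊗[R] A)
    (hU : ∀ i j : Fin N, U i j = ∑ k, (u i k) ⊗ₜ[R] (u k j)) :
    (∀ i j k : Fin N, j ≠ k → U i j * U i k = -(U i k * U i j)) ∧
    (∀ j i k : Fin N, i ≠ k → U i j * U k j = -(U k j * U i j)) ∧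
    (∀ i j k l : Fin N, i ≠ k → j ≠ l → U i j * U k l = U k l * U i j) := by
  refine ⟨fun i j k hjk => ?_, fun j i k hik => ?_, fun i j k l hik hjl => ?_⟩
  · rw [eq_neg_iff_add_eq_zero]
    simp only [hU, Finset.sum_mul_sum, Algebra.TensorProduct.tmul_mul_tmul]
    refine sum_pair_cancel _ _ _ fun a _ b _ => ?_
    rcases eq_or_ne a b with rfl | hab
    · rw [hrow a j k hjk, TensorProduct.tmul_neg, neg_add_cancel]
    · rw [hrow i b a hab.symm, hcomm b k a j hab.symm hjk.symm,
        TensorProduct.neg_tmul, add_neg_cancel]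
  · rw [eq_neg_iff_add_eq_zero]
    simp only [hU, Finset.sum_mul_sum, Algebra.TensorProduct.tmul_mul_tmul]
    refine sum_pair_cancel _ _ _ fun a _ b _ => ?_
    rcases eq_or_ne a b with rfl | hab
    · rw [hcol a i k hik, TensorProduct.neg_tmul, neg_add_cancel]
    · rw [hcomm k b i a hik.symm hab.symm, hcol j b a hab.symm,
        TensorProduct.tmul_neg, add_neg_cancel]
  · simp only [hU, Finset.sum_mul_sum, Algebra.TensorProduct.tmul_mul_tmul]
    refine sum_pair_eq _ _ _ fun a _ b _ => ?_
    rcases eq_or_ne a b with rfl | hab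
    · rw [hcol a k i hik.symm, hrow a l j hjl.symm,
        TensorProduct.neg_tmul, TensorProduct.tmul_neg, neg_neg]
    · rw [hcomm k b i a hik.symm hab.symm, hcomm b l a j hab.symm hjl.symm]
end

section
/- Let R be a commutative ring, A an R-algebra, and u : Fin N → Fin N → A. For index pairs (i,a), (j,b), (k,c) in Fin N × Fin N define the sign ε((i,a),(j,b),(k,c)) ∈ {−1, +1} to be −1 when exactly one of the two sets {i,j,k}, {a,b,c} has 3 elements, and +1 otherwise. Assume u i a * u j b * u k c = ε((i,a),(j,b),(k,c)) • (u k c * u j b * u i a) for all index pairs. Then the elements U i j := ∑ k, (u i k) ⊗ₜ (u k j) of A ⊗[R] A satisfy the same relations: U i a * U j b * U k c = ε((i,a),(j,b),(k,c)) • (U k c * U j b * U i a) for all index pairs. -/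
open scoped TensorProduct

/-- The sign associated to three index pairs: `-1` when exactly one of the sets of first
coordinates (rows) and of second coordinates (columns) has 3 elements, `+1` otherwise. -/
def signEps {N : ℕ} (p q r : Fin N × Fin N) : ℤ :=
  if (({p.1, q.1, r.1} : Finset (Fin N)).card = 3 ∧
        ¬(({p.2, q.2, r.2} : Finset (Fin N)).card = 3)) ∨
      (({p.2, q.2, r.2} : Finset (Fin N)).card = 3 ∧
        ¬(({p.1, q.1, r.1} : Finset (Fin N)).card = 3))
  then -1 else 1

lemma signEps_mul {N : ℕ} (p q r : Fin N × Fin N) (x y z : Fin N) :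
    signEps (p.1, x) (q.1, y) (r.1, z) * signEps (x, p.2) (y, q.2) (z, r.2) =
      signEps p q r := by
  unfold signEps
  by_cases hr : ({p.1, q.1, r.1} : Finset (Fin N)).card = 3 <;>
  by_cases hm : ({x, y, z} : Finset (Fin N)).card = 3 <;>
  by_cases hc : ({p.2, q.2, r.2} : Finset (Fin N)).card = 3 <;>
  simp [hr, hm, hc]

lemma sum_rev {M : Type*} [AddCommMonoid M] {n : ℕ} (F : Fin n → Fin n → Fin n → M) :
    ∑ z, ∑ y, ∑ x, F z y x = ∑ x, ∑ y, ∑ z, F z y x := by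
  rw [Finset.sum_comm]
  rw [show (∑ y, ∑ z, ∑ x, F z y x) = ∑ y, ∑ x, ∑ z, F z y x from
    Finset.sum_congr rfl fun y _ => by rw [Finset.sum_comm]]
  rw [Finset.sum_comm]

/-- The comultiplication formula `U i j = ∑ k, u i k ⊗ u k j` preserves the twisted
half-liberated relations `u i a * u j b * u k c = ε • (u k c * u j b * u i a)`. -/
theorem twisted_half_liberated_comultiplication {R : Type*} [CommRing R] {A : Type*}
    [Ring A] [Algebra R A] {N : ℕ} (u : Fin N → Fin N → A)
    (h : ∀ p q r : Fin N × Fin N,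
      u p.1 p.2 * u q.1 q.2 * u r.1 r.2 =
        signEps p q r • (u r.1 r.2 * u q.1 q.2 * u p.1 p.2))
    (U : Fin N → Fin N → A ⊗[R] A)
    (hU : ∀ i j : Fin N, U i j = ∑ k, (u i k) ⊗ₜ[R] (u k j)) :
    ∀ p q r : Fin N × Fin N,
      U p.1 p.2 * U q.1 q.2 * U r.1 r.2 =
        signEps p q r • (U r.1 r.2 * U q.1 q.2 * U p.1 p.2) := by
  have h' : ∀ i a j b k c : Fin N, u i a * u j b * u k c =
      signEps (i, a) (j, b) (k, c) • (u k c * u j b * u i a) :=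
    fun i a j b k c => h (i, a) (j, b) (k, c)
  intro p q r
  simp only [hU, Finset.sum_mul, Finset.mul_sum, Algebra.TensorProduct.tmul_mul_tmul,
    Finset.smul_sum]
  rw [sum_rev (fun z y x =>
      (u p.1 x * u q.1 y * u r.1 z) ⊗ₜ[R] (u x p.2 * u y q.2 * u z r.2))]
  refine Finset.sum_congr rfl fun x _ => Finset.sum_congr rfl fun y _ =>
    Finset.sum_congr rfl fun z _ => ?_
  rw [h' p.1 x q.1 y r.1 z, h' x p.2 y q.2 z r.2, TensorProduct.tmul_smul,
    TensorProduct.smul_tmul', TensorProduct.smul_tmul', smul_smul, mul_comm, signEps_mul]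
end

section
/- Let R be a commutative ring and A, B two R-algebras. Let u : Fin N → Fin N → A satisfy: u i j * u i k = - (u i k * u i j) for j ≠ k; u i j * u k j = - (u k j * u i j) for i ≠ k; u i j * u k l = u k l * u i j for i ≠ k, j ≠ l. Let z : Fin N → B satisfy z j * z l = - (z l * z j) for j ≠ l. Define Z i := ∑ j, (u i j) ⊗ₜ (z j) in A ⊗[R] B. Then Z i * Z k = - (Z k * Z i) for all i ≠ k. -/
open scoped TensorProduct

/-- The coaction formula `Z i = ∑ j, u i j ⊗ z j` of the twisted orthogonal quantum group
on the twisted real sphere produces pairwise anticommuting elements. -/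
theorem twisted_coaction_anticommutation {R : Type*} [CommRing R] {A B : Type*} [Ring A]
    [Algebra R A] [Ring B] [Algebra R B] {N : ℕ}
    (u : Fin N → Fin N → A) (z : Fin N → B)
    (hrow : ∀ i j k : Fin N, j ≠ k → u i j * u i k = -(u i k * u i j))
    (hcol : ∀ j i k : Fin N, i ≠ k → u i j * u k j = -(u k j * u i j))
    (hcomm : ∀ i j k l : Fin N, i ≠ k → j ≠ l → u i j * u k l = u k l * u i j)
    (hz : ∀ j l : Fin N, j ≠ l → z j * z l = -(z l * z j))
    (Z : Fin N → A ⊗[R] B)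
    (hZ : ∀ i : Fin N, Z i = ∑ j, (u i j) ⊗ₜ[R] (z j)) :
    ∀ i k : Fin N, i ≠ k → Z i * Z k = -(Z k * Z i) := by
  intro i k hik
  rw [hZ, hZ, Finset.sum_mul_sum, Finset.sum_mul_sum, eq_neg_iff_add_eq_zero]
  simp only [Algebra.TensorProduct.tmul_mul_tmul]
  rw [Finset.sum_comm (s := (Finset.univ : Finset (Fin N)))
    (t := (Finset.univ : Finset (Fin N)))
    (f := fun j l => (u k j * u i l) ⊗ₜ[R] (z j * z l)), ← Finset.sum_add_distrib]
  refine Finset.sum_eq_zero fun j _ => ?_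
  rw [← Finset.sum_add_distrib]
  refine Finset.sum_eq_zero fun l _ => ?_
  by_cases h : j = l
  · subst h
    rw [← TensorProduct.add_tmul, hcol j i k hik, neg_add_cancel, TensorProduct.zero_tmul]
  · rw [hcomm i j k l hik h, hz j l h, TensorProduct.tmul_neg, neg_add_cancel]
end

section
/- Let l, N be natural numbers and let π, σ be two setoids (equivalence relations) on Fin l. Then the number of functions j : Fin l → Fin N that are constant on the classes of π and constant on the classes of σ (i.e. π.r a b → j a = j b and σ.r a b → j a = j b for all a, b) equals N raised to the number of equivalence classes of the join π ⊔ σ in the lattice of setoids on Fin l. -/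
/-- Gram matrix computation: the number of functions `j : Fin l → Fin N` constant on the
classes of two setoids `π` and `σ` equals `N` raised to the number of equivalence classes
of the join `π ⊔ σ`. -/
theorem gram_matrix_count (l N : ℕ) (π σ : Setoid (Fin l)) :
    Nat.card {j : Fin l → Fin N //
        (∀ a b : Fin l, π.r a b → j a = j b) ∧ (∀ a b : Fin l, σ.r a b → j a = j b)} =
      N ^ Nat.card (Quotient (π ⊔ σ)) := by
  have key : ∀ j : Fin l → Fin N,
      ((∀ a b : Fin l, π.r a b → j a = j b) ∧ (∀ a b : Fin l, σ.r a b → j a = j b)) ↔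
      ∀ a b : Fin l, (π ⊔ σ).r a b → j a = j b := by
    intro j
    constructor
    · rintro ⟨h1, h2⟩ a b hab
      have hle : π ⊔ σ ≤ Setoid.ker j := sup_le h1 h2
      exact hle hab
    · intro h
      exact ⟨fun a b hab => h a b (le_sup_left (a := π) (b := σ) hab),
             fun a b hab => h a b (le_sup_right (a := π) (b := σ) hab)⟩
  have e : {j : Fin l → Fin N //
        (∀ a b : Fin l, π.r a b → j a = j b) ∧ (∀ a b : Fin l, σ.r a b → j a = j b)} ≃
      (Quotient (π ⊔ σ) → Fin N) :=
    { toFun := fun j => Quotient.lift j.1 (fun a b hab => ((key j.1).1 j.2) a b hab)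
      invFun := fun f => ⟨fun a => f (Quotient.mk _ a),
        (key _).2 (fun a b hab => congrArg f (Quotient.sound hab))⟩
      left_inv := fun j => by ext a; rfl
      right_inv := fun f => by
        funext q
        induction q using Quotient.inductionOn with
        | h a => rfl }
  rw [Nat.card_congr e, Nat.card_fun, Nat.card_eq_fintype_card, Fintype.card_fin]
end
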